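/- For every ε > 0 and Ω ≥ 0, the two-dimensional Thomas–Fermi functional 𝓔^TF attains its infimum over the admissible class at the density ρ^TF(x) = (ε²/2) · max(μ + (Ω²/4)|x|², 0) for x ∈ D, where μ ∈ ℝ is the unique real number for which ∫_D ρ^TF = 1; this minimizer is unique up to sets of Lebesgue measure zero. -/

import Mathlib

open MeasureTheory Filter Topology

noncomputable section

/-- The plane `ℝ²`. -/
abbrev E2 := EuclideanSpace ℝ (Fin 2)

/-- The closed unit disc `D ⊂ ℝ²`. -/
def unitDisc : Set E2 := Metric.closedBall 0 1

/-- The integrand of the 2D Thomas–Fermi functional: `−(Ω²/4)|x|²ρ + ε⁻²ρ²`. -/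
def tfIntegrand2 (ε Ω : ℝ) (ρ : E2 → ℝ) (x : E2) : ℝ :=
  -(Ω ^ 2 / 4) * ‖x‖ ^ 2 * ρ x + (1 / ε ^ 2) * ρ x ^ 2

/-- Admissible densities for the 2D Thomas–Fermi problem. -/
def tfAdmissible2 (ρ : E2 → ℝ) : Prop :=
  Measurable ρ ∧ (∀ x, 0 ≤ ρ x) ∧ IntegrableOn ρ unitDisc ∧
    IntegrableOn (fun x => ρ x ^ 2) unitDisc ∧ (∫ x in unitDisc, ρ x) = 1

/-- The 2D Thomas–Fermi energy `E^TF(ε,Ω)`. -/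
def ETF2 (ε Ω : ℝ) : ℝ :=
  sInf { e | ∃ ρ : E2 → ℝ, tfAdmissible2 ρ ∧ e = ∫ x in unitDisc, tfIntegrand2 ε Ω ρ x }

/-- The candidate Thomas–Fermi minimizer with chemical potential `μ`:
`ρ^TF(x) = (ε²/2) [μ + (Ω²/4)|x|²]₊`. -/
def rhoTF2 (ε Ω μ : ℝ) (x : E2) : ℝ :=
  ε ^ 2 / 2 * max (μ + Ω ^ 2 / 4 * ‖x‖ ^ 2) 0

/-!
The density `ρ^TF` is the pointwise minimizer of the grand-canonical integrand: completing the
square, for every `t ≥ 0`,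
`ε⁻² t² − c t ≥ ε⁻² r² − c r + ε⁻² (t − r)²` with `c = μ + (Ω²/4)|x|²` and `r = (ε²/2)[c]₊`.
Integrating over `D` and using `∫ ρ = ∫ ρ^TF = 1` gives `𝓔[ρ] ≥ 𝓔[ρ^TF] + ε⁻² ∫ (ρ − ρ^TF)²`,
which yields both minimality and uniqueness. The chemical potential exists by the intermediate
value theorem, and is unique because `μ ↦ ∫_D ρ^TF` is strictly increasing where it is positive.
-/

lemma isCompact_unitDisc : IsCompact unitDisc := isCompact_closedBall 0 1

lemma measurableSet_unitDisc : MeasurableSet unitDisc := measurableSet_closedBall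

lemma norm_le_one_of_mem_unitDisc {x : E2} (hx : x ∈ unitDisc) : ‖x‖ ≤ 1 :=
  mem_closedBall_zero_iff.1 hx

lemma measureReal_unitDisc_pos : 0 < volume.real unitDisc :=
  ENNReal.toReal_pos (Metric.measure_closedBall_pos volume 0 one_pos).ne'
    measure_closedBall_lt_top.ne

section rhoTF2

variable (ε Ω : ℝ)

lemma continuous_rhoTF2 (μ : ℝ) : Continuous (rhoTF2 ε Ω μ) := by
  unfold rhoTF2; fun_prop

lemma rhoTF2_nonneg (μ : ℝ) (x : E2) : 0 ≤ rhoTF2 ε Ω μ x :=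
  mul_nonneg (by positivity) (le_max_right _ _)

lemma integrableOn_rhoTF2 (μ : ℝ) : IntegrableOn (rhoTF2 ε Ω μ) unitDisc :=
  (continuous_rhoTF2 ε Ω μ).continuousOn.integrableOn_compact isCompact_unitDisc

lemma monotone_rhoTF2 (x : E2) : Monotone fun μ => rhoTF2 ε Ω μ x := fun _ _ h =>
  mul_le_mul_of_nonneg_left (max_le_max (by linarith) le_rfl) (by positivity)

lemma mul_le_rhoTF2 (μ : ℝ) (x : E2) : ε ^ 2 / 2 * μ ≤ rhoTF2 ε Ω μ x :=
  mul_le_mul_of_nonneg_left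
    ((le_add_of_nonneg_right (by positivity)).trans (le_max_left _ _)) (by positivity)

lemma rhoTF2_eq_zero_of_mem_unitDisc {x : E2} (hx : x ∈ unitDisc) :
    rhoTF2 ε Ω (-(Ω ^ 2 / 4)) x = 0 := by
  have hx2 : ‖x‖ ^ 2 ≤ 1 := pow_le_one₀ (norm_nonneg x) (norm_le_one_of_mem_unitDisc hx)
  have hc : -(Ω ^ 2 / 4) + Ω ^ 2 / 4 * ‖x‖ ^ 2 ≤ 0 := by nlinarith [sq_nonneg Ω]
  simp only [rhoTF2, max_eq_right hc, mul_zero]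

lemma rhoTF2_eq_zero_of_lt_of_eq (hε : ε ≠ 0) {μ₁ μ₂ : ℝ} (hμ : μ₁ < μ₂) {x : E2}
    (h : rhoTF2 ε Ω μ₁ x = rhoTF2 ε Ω μ₂ x) : rhoTF2 ε Ω μ₁ x = 0 := by
  have hε2 : ε ^ 2 / 2 ≠ 0 := by positivity
  simp only [rhoTF2, mul_eq_zero, hε2, false_or, mul_right_inj' hε2] at h ⊢
  rcases le_or_gt (μ₁ + Ω ^ 2 / 4 * ‖x‖ ^ 2) 0 with hc | hc
  · exact max_eq_right hc
  · rw [max_eq_left hc.le, max_eq_left (by linarith)] at h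
    linarith

lemma continuous_integral_rhoTF2 :
    Continuous fun μ => ∫ x in unitDisc, rhoTF2 ε Ω μ x :=
  continuous_parametric_integral_of_continuous (by unfold rhoTF2; fun_prop) isCompact_unitDisc

lemma exists_integral_rhoTF2_eq_one (hε : 0 < ε) :
    ∃ μ, ∫ x in unitDisc, rhoTF2 ε Ω μ x = 1 := by
  have hD := measureReal_unitDisc_pos
  have h_low : ∫ x in unitDisc, rhoTF2 ε Ω (-(Ω ^ 2 / 4)) x = 0 := by
    rw [setIntegral_congr_fun measurableSet_unitDisc
      fun x hx => rhoTF2_eq_zero_of_mem_unitDisc ε Ω hx]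
    simp
  have h_high : 1 ≤ ∫ x in unitDisc, rhoTF2 ε Ω (2 / (ε ^ 2 * volume.real unitDisc)) x :=
    calc (1 : ℝ) = ∫ _ in unitDisc, ε ^ 2 / 2 * (2 / (ε ^ 2 * volume.real unitDisc)) := by
          rw [setIntegral_const, smul_eq_mul]
          field_simp
      _ ≤ _ := setIntegral_mono (integrableOn_const measure_closedBall_lt_top.ne)
          (integrableOn_rhoTF2 ε Ω _) (mul_le_rhoTF2 ε Ω _)
  obtain ⟨μ, -, hμ⟩ := intermediate_value_Icc
    ((neg_nonpos.2 (by positivity)).trans (by positivity))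
    (continuous_integral_rhoTF2 ε Ω).continuousOn
    (⟨h_low ▸ zero_le_one, h_high⟩ : (1 : ℝ) ∈ Set.Icc _ _)
  exact ⟨μ, hμ⟩

lemma integral_rhoTF2_lt_of_lt (hε : ε ≠ 0) {μ₁ μ₂ : ℝ} (hμ : μ₁ < μ₂)
    (hpos : 0 < ∫ x in unitDisc, rhoTF2 ε Ω μ₁ x) :
    ∫ x in unitDisc, rhoTF2 ε Ω μ₁ x < ∫ x in unitDisc, rhoTF2 ε Ω μ₂ x := by
  refine (setIntegral_mono (integrableOn_rhoTF2 ε Ω μ₁) (integrableOn_rhoTF2 ε Ω μ₂)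
    fun x => monotone_rhoTF2 ε Ω x hμ.le).lt_of_ne fun h => hpos.ne' ?_
  have h_ae := (integral_eq_iff_of_ae_le (integrableOn_rhoTF2 ε Ω μ₁)
    (integrableOn_rhoTF2 ε Ω μ₂) (ae_of_all _ fun x => monotone_rhoTF2 ε Ω x hμ.le)).1 h
  calc ∫ x in unitDisc, rhoTF2 ε Ω μ₁ x = ∫ _ in unitDisc, (0 : ℝ) :=
        integral_congr_ae (h_ae.mono fun x hx => rhoTF2_eq_zero_of_lt_of_eq ε Ω hε hμ hx)
    _ = 0 := integral_zero _ _

lemma integral_rhoTF2_injective (hε : ε ≠ 0) {μ₁ μ₂ : ℝ}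
    (h₁ : ∫ x in unitDisc, rhoTF2 ε Ω μ₁ x = 1) (h₂ : ∫ x in unitDisc, rhoTF2 ε Ω μ₂ x = 1) :
    μ₁ = μ₂ := by
  rcases lt_trichotomy μ₁ μ₂ with h | h | h
  · exact absurd (integral_rhoTF2_lt_of_lt ε Ω hε h (by linarith)) (by linarith)
  · exact h
  · exact absurd (integral_rhoTF2_lt_of_lt ε Ω hε h (by linarith)) (by linarith)

end rhoTF2

section energy

variable {ε : ℝ} (Ω : ℝ)

-- For `c ≥ 0` this is an identity: `(ε²/2) c` is the vertex of the parabola `t ↦ ε⁻² t² − c t`.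
lemma sq_sub_mul_add_sq_le_of_nonneg (hε : 0 < ε) (c : ℝ) {t : ℝ} (ht : 0 ≤ t) :
    1 / ε ^ 2 * (ε ^ 2 / 2 * max c 0) ^ 2 - c * (ε ^ 2 / 2 * max c 0)
      + 1 / ε ^ 2 * (t - ε ^ 2 / 2 * max c 0) ^ 2 ≤ 1 / ε ^ 2 * t ^ 2 - c * t := by
  rcases le_total c 0 with hc | hc
  · rw [max_eq_right hc]
    nlinarith [mul_nonneg (neg_nonneg.2 hc) ht]
  · rw [max_eq_left hc]
    exact le_of_eq (by field_simp; ring)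

lemma tfIntegrand2_rhoTF2_add_sq_le (hε : 0 < ε) (μ : ℝ) (ρ : E2 → ℝ) {x : E2}
    (hx : 0 ≤ ρ x) :
    tfIntegrand2 ε Ω (rhoTF2 ε Ω μ) x - μ * rhoTF2 ε Ω μ x
        + 1 / ε ^ 2 * (ρ x - rhoTF2 ε Ω μ x) ^ 2
      ≤ tfIntegrand2 ε Ω ρ x - μ * ρ x := by
  have h := sq_sub_mul_add_sq_le_of_nonneg hε (μ + Ω ^ 2 / 4 * ‖x‖ ^ 2) hx
  simp only [tfIntegrand2, rhoTF2] at h ⊢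
  linarith

lemma tfIntegrand2_rhoTF2_sub_mul_le (hε : 0 < ε) (μ : ℝ) (ρ : E2 → ℝ) {x : E2}
    (hx : 0 ≤ ρ x) :
    tfIntegrand2 ε Ω (rhoTF2 ε Ω μ) x - μ * rhoTF2 ε Ω μ x ≤ tfIntegrand2 ε Ω ρ x - μ * ρ x :=
  (le_add_of_nonneg_right (by positivity)).trans (tfIntegrand2_rhoTF2_add_sq_le Ω hε μ ρ hx)

lemma integrableOn_tfIntegrand2 {ρ : E2 → ℝ} (hρ : IntegrableOn ρ unitDisc)
    (hρ2 : IntegrableOn (fun x => ρ x ^ 2) unitDisc) :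
    IntegrableOn (tfIntegrand2 ε Ω ρ) unitDisc :=
  (hρ.continuousOn_mul (g := fun x => -(Ω ^ 2 / 4) * ‖x‖ ^ 2) (by fun_prop)
    isCompact_unitDisc).add (hρ2.const_mul _)

lemma tfAdmissible2_rhoTF2 {μ : ℝ} (hμ : ∫ x in unitDisc, rhoTF2 ε Ω μ x = 1) :
    tfAdmissible2 (rhoTF2 ε Ω μ) :=
  ⟨(continuous_rhoTF2 ε Ω μ).measurable, rhoTF2_nonneg ε Ω μ, integrableOn_rhoTF2 ε Ω μ,
    ((continuous_rhoTF2 ε Ω μ).pow 2).continuousOn.integrableOn_compact isCompact_unitDisc,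
    hμ⟩

lemma integrableOn_tfIntegrand2_sub_mul {ρ : E2 → ℝ} (hρ : tfAdmissible2 ρ) (μ : ℝ) :
    IntegrableOn (fun x => tfIntegrand2 ε Ω ρ x - μ * ρ x) unitDisc :=
  (integrableOn_tfIntegrand2 Ω hρ.2.2.1 hρ.2.2.2.1).sub (hρ.2.2.1.const_mul μ)

lemma setIntegral_tfIntegrand2_sub_mul {ρ : E2 → ℝ} (hρ : tfAdmissible2 ρ) (μ : ℝ) :
    ∫ x in unitDisc, (tfIntegrand2 ε Ω ρ x - μ * ρ x)
      = (∫ x in unitDisc, tfIntegrand2 ε Ω ρ x) - μ := by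
  rw [integral_sub (integrableOn_tfIntegrand2 Ω hρ.2.2.1 hρ.2.2.2.1) (hρ.2.2.1.const_mul μ),
    integral_const_mul, hρ.2.2.2.2, mul_one]

lemma integral_tfIntegrand2_rhoTF2_le (hε : 0 < ε) {μ : ℝ}
    (hμ : ∫ x in unitDisc, rhoTF2 ε Ω μ x = 1) {ρ : E2 → ℝ} (hρ : tfAdmissible2 ρ) :
    ∫ x in unitDisc, tfIntegrand2 ε Ω (rhoTF2 ε Ω μ) x
      ≤ ∫ x in unitDisc, tfIntegrand2 ε Ω ρ x := by
  have h := setIntegral_mono (integrableOn_tfIntegrand2_sub_mul Ω (tfAdmissible2_rhoTF2 Ω hμ) μ)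
    (integrableOn_tfIntegrand2_sub_mul Ω hρ μ) fun x =>
      tfIntegrand2_rhoTF2_sub_mul_le Ω hε μ ρ (hρ.2.1 x)
  rwa [setIntegral_tfIntegrand2_sub_mul Ω (tfAdmissible2_rhoTF2 Ω hμ),
    setIntegral_tfIntegrand2_sub_mul Ω hρ, sub_le_sub_iff_right] at h

lemma isLeast_integral_tfIntegrand2_rhoTF2 (hε : 0 < ε) {μ : ℝ}
    (hμ : ∫ x in unitDisc, rhoTF2 ε Ω μ x = 1) :
    IsLeast { e | ∃ ρ : E2 → ℝ, tfAdmissible2 ρ ∧ e = ∫ x in unitDisc, tfIntegrand2 ε Ω ρ x }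
      (∫ x in unitDisc, tfIntegrand2 ε Ω (rhoTF2 ε Ω μ) x) :=
  ⟨⟨_, tfAdmissible2_rhoTF2 Ω hμ, rfl⟩, by
    rintro _ ⟨ρ, hρ, rfl⟩
    exact integral_tfIntegrand2_rhoTF2_le Ω hε hμ hρ⟩

lemma ae_eq_rhoTF2_of_integral_tfIntegrand2_eq (hε : 0 < ε) {μ : ℝ}
    (hμ : ∫ x in unitDisc, rhoTF2 ε Ω μ x = 1) {ρ : E2 → ℝ} (hρ : tfAdmissible2 ρ)
    (h : ∫ x in unitDisc, tfIntegrand2 ε Ω ρ x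
      = ∫ x in unitDisc, tfIntegrand2 ε Ω (rhoTF2 ε Ω μ) x) :
    ρ =ᵐ[volume.restrict unitDisc] rhoTF2 ε Ω μ := by
  have h_ae := (integral_eq_iff_of_ae_le
    (integrableOn_tfIntegrand2_sub_mul Ω (tfAdmissible2_rhoTF2 Ω hμ) μ)
    (integrableOn_tfIntegrand2_sub_mul Ω hρ μ)
    (ae_of_all _ fun x => tfIntegrand2_rhoTF2_sub_mul_le Ω hε μ ρ (hρ.2.1 x))).1 (by
    rw [setIntegral_tfIntegrand2_sub_mul Ω (tfAdmissible2_rhoTF2 Ω hμ),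
      setIntegral_tfIntegrand2_sub_mul Ω hρ, h])
  filter_upwards [h_ae] with x hx
  have h_le := tfIntegrand2_rhoTF2_add_sq_le Ω hε μ ρ (hρ.2.1 x)
  rw [hx, add_le_iff_nonpos_right] at h_le
  have h_sq : (ρ x - rhoTF2 ε Ω μ x) ^ 2 = 0 :=
    le_antisymm (nonpos_of_mul_nonpos_right h_le (by positivity)) (sq_nonneg _)
  exact sub_eq_zero.1 (pow_eq_zero_iff two_ne_zero |>.1 h_sq)

end energy

theorem tf2_minimizer_general (ε Ω : ℝ) (hε : 0 < ε) :
    (∃! μ : ℝ, (∫ x in unitDisc, rhoTF2 ε Ω μ x) = 1) ∧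
    ∀ μ : ℝ, (∫ x in unitDisc, rhoTF2 ε Ω μ x) = 1 →
      tfAdmissible2 (rhoTF2 ε Ω μ) ∧
      (∫ x in unitDisc, tfIntegrand2 ε Ω (rhoTF2 ε Ω μ) x) = ETF2 ε Ω ∧
      ∀ ρ : E2 → ℝ, tfAdmissible2 ρ →
        (∫ x in unitDisc, tfIntegrand2 ε Ω ρ x) = ETF2 ε Ω →
          ∀ᵐ x ∂volume.restrict unitDisc, ρ x = rhoTF2 ε Ω μ x := by
  obtain ⟨μ₀, hμ₀⟩ := exists_integral_rhoTF2_eq_one ε Ω hε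
  refine ⟨⟨μ₀, hμ₀, fun μ hμ => integral_rhoTF2_injective ε Ω hε.ne' hμ hμ₀⟩, fun μ hμ => ?_⟩
  have h_min : ∫ x in unitDisc, tfIntegrand2 ε Ω (rhoTF2 ε Ω μ) x = ETF2 ε Ω :=
    (isLeast_integral_tfIntegrand2_rhoTF2 Ω hε hμ).csInf_eq.symm
  exact ⟨tfAdmissible2_rhoTF2 Ω hμ, h_min, fun ρ hρ hE =>
    ae_eq_rhoTF2_of_integral_tfIntegrand2_eq Ω hε hμ hρ (hE.trans h_min.symm)⟩

/-- **The 2D Thomas–Fermi functional attains its infimum at the explicit density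
`ρ^TF(x) = (ε²/2)[μ + (Ω²/4)|x|²]₊`**, where `μ` is the unique real number normalizing
`∫_D ρ^TF = 1`; moreover the minimizer is unique up to sets of Lebesgue measure zero. -/
theorem tf2_minimizer (ε Ω : ℝ) (hε : 0 < ε) (hΩ : 0 ≤ Ω) :
    (∃! μ : ℝ, (∫ x in unitDisc, rhoTF2 ε Ω μ x) = 1) ∧
    ∀ μ : ℝ, (∫ x in unitDisc, rhoTF2 ε Ω μ x) = 1 →
      tfAdmissible2 (rhoTF2 ε Ω μ) ∧
      (∫ x in unitDisc, tfIntegrand2 ε Ω (rhoTF2 ε Ω μ) x) = ETF2 ε Ω ∧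
      ∀ ρ : E2 → ℝ, tfAdmissible2 ρ →
        (∫ x in unitDisc, tfIntegrand2 ε Ω ρ x) = ETF2 ε Ω →
          ∀ᵐ x ∂volume.restrict unitDisc, ρ x = rhoTF2 ε Ω μ x :=
  tf2_minimizer_general ε Ω hε
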